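/- Let θ > 0 satisfy 2θ² = α + √β with α, β ∈ ℚ, α, β > 0, √β irrational, and α² < β. Then there is no point in the plane of the equilateral triangle of side θ at rational distance from all three vertices. -/

import Mathlib

/-!
For an equilateral triangle of side `d` and any point of its plane at distances `a, b, c` from
the vertices, the vanishing of the Cayley–Menger determinant of the four points reads
`(a² + b² + c² + d²)² = 3 (a⁴ + b⁴ + c⁴ + d⁴)`. If `a, b, c` are rational and
`2d² = α + √β`, this becomes `(α - s) √β + ((α² + β)/2 - sα + 3P - s²) = 0` with rationals
`s = a² + b² + c²`, `P = a⁴ + b⁴ + c⁴`. Irrationality of `√β` forces `s = α` and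
`3P = (3α² - β)/2`, while `s² ≤ 3P` then gives `β ≤ α²`.
-/

noncomputable section

abbrev Pt := EuclideanSpace ℝ (Fin 2)

def IsRat (x : ℝ) : Prop := ∃ q : ℚ, (q : ℝ) = x

/-- `θ` is "good": some point of the plane is at rational distance from all
vertices of an equilateral triangle of side length `θ`. -/
def Good (θ : ℝ) : Prop :=
  ∃ A B C M : Pt, dist A B = θ ∧ dist B C = θ ∧ dist C A = θ ∧
    IsRat (dist M A) ∧ IsRat (dist M B) ∧ IsRat (dist M C)

lemma mul_equilateral_relation_eq_zero_of_gram_det_eq_zero (p q r t x y z : ℝ)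
    (hgram : p * q * r - p * y ^ 2 - r * x ^ 2 + 2 * x * y * z - q * z ^ 2 = 0)
    (hx : x = (p + q - t) / 2) (hy : y = (q + r - t) / 2) (hz : z = (p + r - t) / 2) :
    t * ((p + q + r + t) ^ 2 - 3 * (p ^ 2 + q ^ 2 + r ^ 2 + t ^ 2)) = 0 := by
  subst hx hy hz
  linear_combination 8 * hgram

lemma Pt.dist_sq (X Y : Pt) : dist X Y ^ 2 = (X 0 - Y 0) ^ 2 + (X 1 - Y 1) ^ 2 := by
  simp [EuclideanSpace.dist_sq_eq, Fin.sum_univ_two, Real.dist_eq, sq_abs]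

theorem equilateral_dist_relation {A B C M : Pt} {d : ℝ} (hd : d ≠ 0)
    (hAB : dist A B = d) (hBC : dist B C = d) (hCA : dist C A = d) :
    (dist M A ^ 2 + dist M B ^ 2 + dist M C ^ 2 + d ^ 2) ^ 2 =
      3 * (dist M A ^ 4 + dist M B ^ 4 + dist M C ^ 4 + d ^ 4) := by
  -- the Gram matrix of `A - M`, `B - M`, `C - M` is singular, as the plane is 2-dimensional
  have h := mul_equilateral_relation_eq_zero_of_gram_det_eq_zero
    (dist M A ^ 2) (dist M B ^ 2) (dist M C ^ 2) (d ^ 2)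
    ((A 0 - M 0) * (B 0 - M 0) + (A 1 - M 1) * (B 1 - M 1))
    ((B 0 - M 0) * (C 0 - M 0) + (B 1 - M 1) * (C 1 - M 1))
    ((A 0 - M 0) * (C 0 - M 0) + (A 1 - M 1) * (C 1 - M 1))
    (by simp only [Pt.dist_sq]; ring)
    (by rw [← hAB]; simp only [Pt.dist_sq]; ring)
    (by rw [← hBC]; simp only [Pt.dist_sq]; ring)
    (by rw [← hCA]; simp only [Pt.dist_sq]; ring)
  have h' := (mul_eq_zero.mp h).resolve_left (pow_ne_zero 2 hd)
  linear_combination h'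

theorem Good.exists_rat_relation {θ : ℝ} (h : Good θ) (hθ : θ ≠ 0) :
    ∃ a b c : ℚ, ((a ^ 2 + b ^ 2 + c ^ 2 : ℚ) + θ ^ 2) ^ 2 =
      3 * ((a ^ 4 + b ^ 4 + c ^ 4 : ℚ) + θ ^ 4) := by
  obtain ⟨A, B, C, M, hAB, hBC, hCA, ⟨a, ha⟩, ⟨b, hb⟩, ⟨c, hc⟩⟩ := h
  refine ⟨a, b, c, ?_⟩
  push_cast
  rw [ha, hb, hc]
  exact equilateral_dist_relation hθ hAB hBC hCA

theorem Irrational.eq_zero_of_ratCast_mul_add_ratCast_eq_zero {x : ℝ} (hx : Irrational x)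
    {p q : ℚ} (h : (p : ℝ) * x + q = 0) : p = 0 ∧ q = 0 := by
  have hp : p = 0 := by
    by_contra hp
    exact ((hx.ratCast_mul hp).add_ratCast q).ne_zero h
  subst hp
  simpa using h

theorem stmt_18_general (θ : ℝ) (hθ : 0 < θ) (α β : ℚ) (hβ : 0 < β)
    (hirr : Irrational (Real.sqrt β))
    (hform : 2 * θ ^ 2 = α + Real.sqrt β) (hlt : α ^ 2 < β) :
    ¬ Good θ := by
  intro hgood
  obtain ⟨a, b, c, hrel⟩ := hgood.exists_rat_relation hθ.ne'
  set s : ℚ := a ^ 2 + b ^ 2 + c ^ 2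
  set P : ℚ := a ^ 4 + b ^ 4 + c ^ 4
  have hsqrt : √(β : ℝ) ^ 2 = β := Real.sq_sqrt (by positivity)
  have hsplit :
      ((α - s : ℚ) : ℝ) * √(β : ℝ) + ((α ^ 2 + β) / 2 - s * α + 3 * P - s ^ 2 : ℚ) = 0 := by
    push_cast
    linear_combination
      -hrel - (θ ^ 2 - s + (α + √(β : ℝ)) / 2) * hform - (1 / 2 : ℝ) * hsqrt
  obtain ⟨hs, hrest⟩ := hirr.eq_zero_of_ratCast_mul_add_ratCast_eq_zero hsplit
  have hP : s ^ 2 ≤ 3 * P := by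
    nlinarith [sq_nonneg (a ^ 2 - b ^ 2), sq_nonneg (b ^ 2 - c ^ 2), sq_nonneg (a ^ 2 - c ^ 2)]
  nlinarith

theorem stmt_18 (θ : ℝ) (hθ : 0 < θ) (α β : ℚ) (hα : 0 < α) (hβ : 0 < β)
    (hirr : Irrational (Real.sqrt β))
    (hform : 2 * θ ^ 2 = α + Real.sqrt β) (hlt : α ^ 2 < β) :
    ¬ Good θ :=
  stmt_18_general θ hθ α β hβ hirr hform hlt
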